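/- arXiv:1305.3131 — 4 statements merged into one kernel-verified Lean document; each statement's English description precedes it below -/
import Mathlib

section
/- The tableau calculus T_{K_m} is sound and constructively complete for the logic K_m: (soundness) every fully expanded T_{K_m}-tableau for a satisfiable finite set N of K_m-formulas has an open branch; (constructive completeness) for every open branch B of a fully expanded T_{K_m}-tableau there exists a K_m-model I(B), whose domain is the set of labels occurring in B, in which every tableau formula of B is true: T(φ,t)∈B implies I(B),t ⊨ φ; F(φ,t)∈B implies I(B),t ⊭ φ; T_R(a,t,t')∈B implies (t,t')∈R_a in I(B); F_R(a,t,t')∈B implies (t,t')∉R_a in I(B). -/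
set_option autoImplicit false

namespace KmTableau

/-- Formulas of the multi-modal logic `K_m`:
`φ ::= p | ¬φ | φ∨φ | [a]φ`, with propositional variables `p : ℕ`
and relational constants `a : Fin m`. -/
inductive Fm (m : ℕ) : Type
  | var : ℕ → Fm m
  | neg : Fm m → Fm m
  | or : Fm m → Fm m → Fm m
  | box : Fin m → Fm m → Fm m

/-- A `K_m`-model `M = (W, (R_a)_a, V)` with `W` nonempty. -/
structure KModel (m : ℕ) where
  W : Type
  ne : Nonempty W
  R : Fin m → W → W → Prop
  V : ℕ → W → Prop

/-- Satisfaction in a `K_m`-model. -/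
def KModel.sat {m : ℕ} (M : KModel m) : M.W → Fm m → Prop
  | v, .var p => M.V p v
  | v, .neg φ => ¬ M.sat v φ
  | v, .or φ ψ => M.sat v φ ∨ M.sat v ψ
  | v, .box a φ => ∀ w, M.R a v w → M.sat w φ

/-- A set of formulas is satisfiable if some model and world satisfy all its members. -/
def Satisfiable {m : ℕ} (N : Set (Fm m)) : Prop :=
  ∃ (M : KModel m) (v : M.W), ∀ φ ∈ N, M.sat v φ

/-- Labels: terms generated from the initial constant `a₀` and Skolem terms `f(a,φ,t)`. -/
inductive Label (m : ℕ) : Type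
  | a0 : Label m
  | sk : Fin m → Fm m → Label m → Label m

/-- Tableau formulas: `T(φ,t)`, `F(φ,t)`, `T_R(a,t,t')`, `F_R(a,t,t')`. -/
inductive TabFm (m : ℕ) : Type
  | T : Fm m → Label m → TabFm m
  | F : Fm m → Label m → TabFm m
  | TR : Fin m → Label m → Label m → TabFm m
  | FR : Fin m → Label m → Label m → TabFm m

/-- The labels occurring in a tableau formula. -/
def TabFm.labels {m : ℕ} : TabFm m → Set (Label m)
  | .T _ t => {t}
  | .F _ t => {t}
  | .TR _ t t' => {t, t'}
  | .FR _ t t' => {t, t'}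

/-- The labels occurring in a set of tableau formulas (the initial label `a₀`,
introduced at the root, always counts as occurring). -/
def Lab {m : ℕ} (B : Set (TabFm m)) : Set (Label m) :=
  insert Label.a0 {t | ∃ f ∈ B, t ∈ f.labels}

/-- A calculus: `C s ds` holds if, on a branch whose set of formulas is `s`, some rule
of the calculus is applicable with denominator instances `ds` (a closure rule
application has `ds = []`). -/
abbrev Calc (m : ℕ) := Set (TabFm m) → List (Set (TabFm m)) → Prop

/-- The root node `{T(φ,a₀) | φ ∈ N}` of a tableau for input `N`. -/
def initial {m : ℕ} (N : Set (Fm m)) : Set (TabFm m) :=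
  {f | ∃ φ ∈ N, f = TabFm.T φ Label.a0}

/-- A tableau for input `N` in calculus `C`: a finitely branching tree of sets of tableau
formulas (nodes indexed by positions `List ℕ`, children of `p` being `p ++ [i]`), whose
root is `{T(φ,a₀) | φ ∈ N}`, and such that the children of every node are obtained by
applying a rule of `C`: each child adds one denominator instance to the node's set. -/
structure Tableau (m : ℕ) (C : Calc m) (N : Set (Fm m)) where
  node : List ℕ → Option (Set (TabFm m))
  rootEq : node [] = some (initial N)
  tree : ∀ (p : List ℕ) (i : ℕ), node (p ++ [i]) ≠ none → node p ≠ none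
  step : ∀ (p : List ℕ) (s : Set (TabFm m)), node p = some s →
    (∀ i : ℕ, node (p ++ [i]) = none) ∨
    (∃ ds, C s ds ∧ ∀ i : ℕ, node (p ++ [i]) = (ds[i]?).map (fun d => s ∪ d))

/-- A branch of a tableau: a maximal path from the root (represented by its
set of positions, a maximal chain under the prefix order). -/
structure Branch {m : ℕ} {C : Calc m} {N : Set (Fm m)} (Tb : Tableau m C N) where
  pos : Set (List ℕ)
  inTree : ∀ p ∈ pos, Tb.node p ≠ none
  chain : ∀ p ∈ pos, ∀ q ∈ pos, p <+: q ∨ q <+: p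
  downClosed : ∀ p ∈ pos, ∀ q : List ℕ, q <+: p → q ∈ pos
  maximal : ∀ q : List ℕ, Tb.node q ≠ none → (∀ p ∈ pos, p <+: q ∨ q <+: p) → q ∈ pos

/-- The set of tableau formulas occurring on a branch. -/
def Branch.fmls {m : ℕ} {C : Calc m} {N : Set (Fm m)} {Tb : Tableau m C N}
    (Br : Branch Tb) : Set (TabFm m) :=
  {f | ∃ p ∈ Br.pos, ∃ s, Tb.node p = some s ∧ f ∈ s}

/-- A branch is open if no closure rule has been applied (is applicable) on it. -/
def Branch.IsOpen {m : ℕ} {C : Calc m} {N : Set (Fm m)} {Tb : Tableau m C N}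
    (Br : Branch Tb) : Prop := ¬ C Br.fmls []

/-- A tableau is fully expanded if on every open branch every applicable rule has been
applied, i.e. some denominator instance of the rule is already contained in the branch. -/
def Tableau.Expanded {m : ℕ} {C : Calc m} {N : Set (Fm m)} (Tb : Tableau m C N) : Prop :=
  ∀ Br : Branch Tb, Br.IsOpen → ∀ ds, C Br.fmls ds → ∃ d ∈ ds, d ⊆ Br.fmls

/-- The calculus `T_{K_m}`. -/
def TKm (m : ℕ) : Calc m := fun s ds =>
  -- (¬⁺) T(¬p,x) / F(p,x)
  (∃ φ x, TabFm.T (.neg φ) x ∈ s ∧ ds = [{TabFm.F φ x}]) ∨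
  -- (¬⁻) F(¬p,x) / T(p,x)
  (∃ φ x, TabFm.F (.neg φ) x ∈ s ∧ ds = [{TabFm.T φ x}]) ∨
  -- (∨⁺) T(p∨q,x) / T(p,x) | T(q,x)
  (∃ φ ψ x, TabFm.T (.or φ ψ) x ∈ s ∧ ds = [{TabFm.T φ x}, {TabFm.T ψ x}]) ∨
  -- (∨⁻) F(p∨q,x) / F(p,x), F(q,x)
  (∃ φ ψ x, TabFm.F (.or φ ψ) x ∈ s ∧ ds = [{TabFm.F φ x, TabFm.F ψ x}]) ∨
  -- (box) T([r]p,x) / F_R(r,x,y) | T(p,y), for any label y occurring on the branch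
  (∃ a φ x y, TabFm.T (.box a φ) x ∈ s ∧ y ∈ Lab s ∧
    ds = [{TabFm.FR a x y}, {TabFm.T φ y}]) ∨
  -- (dia) F([r]p,x) / T_R(r,x,f(r,p,x)), F(p,f(r,p,x))
  (∃ a φ x, TabFm.F (.box a φ) x ∈ s ∧
    ds = [{TabFm.TR a x (Label.sk a φ x), TabFm.F φ (Label.sk a φ x)}]) ∨
  -- closure rules
  (∃ φ x, TabFm.T φ x ∈ s ∧ TabFm.F φ x ∈ s ∧ ds = []) ∨
  (∃ a x y, TabFm.TR a x y ∈ s ∧ TabFm.FR a x y ∈ s ∧ ds = [])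

/-- A `K_m`-model whose domain is (a set of) labels: the model `I(B)` constructed from a
branch has domain the set of labels occurring in `B`. -/
structure LModel (m : ℕ) where
  R : Fin m → Label m → Label m → Prop
  V : ℕ → Label m → Prop

/-- Satisfaction in a label model relativised to its domain `D`. -/
def LModel.sat {m : ℕ} (M : LModel m) (D : Set (Label m)) : Label m → Fm m → Prop
  | t, .var p => M.V p t
  | t, .neg φ => ¬ M.sat D t φ
  | t, .or φ ψ => M.sat D t φ ∨ M.sat D t ψ
  | t, .box a φ => ∀ t' ∈ D, M.R a t t' → M.sat D t' φ

/-- Every tableau formula of `B` is true in the model `M` with domain `Lab B`: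
`T(φ,t) ∈ B` implies `φ` holds at `t`; `F(φ,t) ∈ B` implies `φ` fails at `t`;
`T_R(a,t,t') ∈ B` implies `(t,t') ∈ R_a`; `F_R(a,t,t') ∈ B` implies `(t,t') ∉ R_a`. -/
def Reflects {m : ℕ} (M : LModel m) (B : Set (TabFm m)) : Prop :=
  (∀ φ t, TabFm.T φ t ∈ B → M.sat (Lab B) t φ) ∧
  (∀ φ t, TabFm.F φ t ∈ B → ¬ M.sat (Lab B) t φ) ∧
  (∀ a t t', TabFm.TR a t t' ∈ B → M.R a t t') ∧
  (∀ a t t', TabFm.FR a t t' ∈ B → ¬ M.R a t t')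

/-!
Soundness: if `M, v ⊨ N`, interpret `a₀` as `v` and each Skolem label `f(a,φ,t)` as an
`R_a`-successor of (the interpretation of) `t` refuting `φ`, whenever one exists. Under this
interpretation every rule applied to a true set of tableau formulas has a true denominator, so
always descending into a true child yields a branch all of whose formulas are true; no closure
rule applies to it.

Completeness: an open, fully expanded branch `B` determines the model `I(B)` with
`R_a = {(t,t') | T_R(a,t,t') ∈ B}` and `V(p) = {t | T(p,t) ∈ B}`. By induction on `φ`, `T(φ,t) ∈ B`
and `F(φ,t) ∈ B` are true in `I(B)`: for a compound `φ` because `B` contains a denominator of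
the rule for `φ`, for atoms and `F_R` because `B` is open.
-/

section Completeness

variable {m : ℕ} {B : Set (TabFm m)}

def IsSaturated (C : Calc m) (B : Set (TabFm m)) : Prop :=
  ∀ ds, C B ds → ∃ d ∈ ds, d ⊆ B

theorem mem_F_of_mem_T_neg (hexp : IsSaturated (TKm m) B) {φ : Fm m}
    {t : Label m} (h : .T (.neg φ) t ∈ B) : .F φ t ∈ B := by
  obtain ⟨d, hd, hdB⟩ := hexp _ (.inl ⟨φ, t, h, rfl⟩)
  rw [List.mem_singleton.mp hd] at hdB
  exact hdB rfl

theorem mem_T_of_mem_F_neg (hexp : IsSaturated (TKm m) B) {φ : Fm m}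
    {t : Label m} (h : .F (.neg φ) t ∈ B) : .T φ t ∈ B := by
  obtain ⟨d, hd, hdB⟩ := hexp _ (.inr <| .inl ⟨φ, t, h, rfl⟩)
  rw [List.mem_singleton.mp hd] at hdB
  exact hdB rfl

theorem mem_T_or_mem_T_of_mem_T_or (hexp : IsSaturated (TKm m) B)
    {φ ψ : Fm m} {t : Label m} (h : .T (.or φ ψ) t ∈ B) : .T φ t ∈ B ∨ .T ψ t ∈ B := by
  obtain ⟨d, hd, hdB⟩ := hexp _ (.inr <| .inr <| .inl ⟨φ, ψ, t, h, rfl⟩)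
  rcases List.mem_pair.mp hd with rfl | rfl
  exacts [.inl (hdB rfl), .inr (hdB rfl)]

theorem mem_F_and_mem_F_of_mem_F_or (hexp : IsSaturated (TKm m) B)
    {φ ψ : Fm m} {t : Label m} (h : .F (.or φ ψ) t ∈ B) : .F φ t ∈ B ∧ .F ψ t ∈ B := by
  obtain ⟨d, hd, hdB⟩ := hexp _ (.inr <| .inr <| .inr <| .inl ⟨φ, ψ, t, h, rfl⟩)
  rw [List.mem_singleton.mp hd] at hdB
  exact ⟨hdB (.inl rfl), hdB (.inr rfl)⟩

theorem mem_FR_or_mem_T_of_mem_T_box (hexp : IsSaturated (TKm m) B)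
    {a : Fin m} {φ : Fm m} {t t' : Label m} (h : .T (.box a φ) t ∈ B) (ht' : t' ∈ Lab B) :
    .FR a t t' ∈ B ∨ .T φ t' ∈ B := by
  obtain ⟨d, hd, hdB⟩ := hexp _ (.inr <| .inr <| .inr <| .inr <| .inl ⟨a, φ, t, t', h, ht', rfl⟩)
  rcases List.mem_pair.mp hd with rfl | rfl
  exacts [.inl (hdB rfl), .inr (hdB rfl)]

theorem mem_TR_and_mem_F_of_mem_F_box (hexp : IsSaturated (TKm m) B)
    {a : Fin m} {φ : Fm m} {t : Label m} (h : .F (.box a φ) t ∈ B) :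
    .TR a t (.sk a φ t) ∈ B ∧ .F φ (.sk a φ t) ∈ B := by
  obtain ⟨d, hd, hdB⟩ := hexp _ (.inr <| .inr <| .inr <| .inr <| .inr <| .inl ⟨a, φ, t, h, rfl⟩)
  rw [List.mem_singleton.mp hd] at hdB
  exact ⟨hdB (.inl rfl), hdB (.inr rfl)⟩

theorem notMem_F_of_mem_T (hopen : ¬ TKm m B []) {φ : Fm m} {t : Label m}
    (hT : .T φ t ∈ B) : .F φ t ∉ B := fun hF =>
  hopen (.inr <| .inr <| .inr <| .inr <| .inr <| .inr <| .inl ⟨φ, t, hT, hF, rfl⟩)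

theorem notMem_FR_of_mem_TR (hopen : ¬ TKm m B []) {a : Fin m} {t t' : Label m}
    (hT : .TR a t t' ∈ B) : .FR a t t' ∉ B := fun hF =>
  hopen (.inr <| .inr <| .inr <| .inr <| .inr <| .inr <| .inr ⟨a, t, t', hT, hF, rfl⟩)

/-- The model `I(B)`: `R_a` is read off the `T_R`-formulas of `B`, `V` off the `T`-literals. -/
def canonicalModel (B : Set (TabFm m)) : LModel m where
  R a t t' := .TR a t t' ∈ B
  V p t := .T (.var p) t ∈ B

theorem canonicalModel_truth (hexp : IsSaturated (TKm m) B)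
    (hopen : ¬ TKm m B []) (φ : Fm m) (t : Label m) :
    (.T φ t ∈ B → (canonicalModel B).sat (Lab B) t φ) ∧
      (.F φ t ∈ B → ¬ (canonicalModel B).sat (Lab B) t φ) := by
  induction φ generalizing t with
  | var p => exact ⟨id, fun hF hT => notMem_F_of_mem_T hopen hT hF⟩
  | neg φ ih =>
    exact ⟨fun h => (ih t).2 (mem_F_of_mem_T_neg hexp h),
      fun h hsat => hsat ((ih t).1 (mem_T_of_mem_F_neg hexp h))⟩
  | or φ ψ ihφ ihψ =>
    refine ⟨fun h => (mem_T_or_mem_T_of_mem_T_or hexp h).imp (ihφ t).1 (ihψ t).1, fun h => ?_⟩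
    obtain ⟨hφ, hψ⟩ := mem_F_and_mem_F_of_mem_F_or hexp h
    exact not_or.mpr ⟨(ihφ t).2 hφ, (ihψ t).2 hψ⟩
  | box a φ ih =>
    refine ⟨fun h t' ht' hR => ?_, fun h hsat => ?_⟩
    · exact (ih t').1 ((mem_FR_or_mem_T_of_mem_T_box hexp h ht').resolve_left
        (notMem_FR_of_mem_TR hopen hR))
    · obtain ⟨hTR, hF⟩ := mem_TR_and_mem_F_of_mem_F_box hexp h
      have hsk : .sk a φ t ∈ Lab B := .inr ⟨_, hTR, .inr rfl⟩
      exact (ih _).2 hF (hsat _ hsk hTR)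

theorem reflects_canonicalModel (hexp : IsSaturated (TKm m) B)
    (hopen : ¬ TKm m B []) : Reflects (canonicalModel B) B :=
  ⟨fun φ t => (canonicalModel_truth hexp hopen φ t).1,
    fun φ t => (canonicalModel_truth hexp hopen φ t).2,
    fun _ _ _ => id, fun _ _ _ hF hT => notMem_FR_of_mem_TR hopen hT hF⟩

end Completeness

section Soundness

variable {m : ℕ}

def TabFm.Holds (M : KModel m) (ι : Label m → M.W) : TabFm m → Prop
  | .T φ t => M.sat (ι t) φ
  | .F φ t => ¬ M.sat (ι t) φ
  | .TR a t t' => M.R a (ι t) (ι t')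
  | .FR a t t' => ¬ M.R a (ι t) (ι t')

open Classical in
/-- When `φ` holds at every `R_a`-successor, the value `v` at `f(a,φ,t)` is arbitrary. -/
noncomputable def skolemInterp (M : KModel m) (v : M.W) : Label m → M.W
  | .a0 => v
  | .sk a φ t =>
    if h : ∃ w, M.R a (skolemInterp M v t) w ∧ ¬ M.sat w φ then h.choose else v

theorem skolemInterp_sk {M : KModel m} {v : M.W} {a : Fin m} {φ : Fm m} {t : Label m}
    (h : ∃ w, M.R a (skolemInterp M v t) w ∧ ¬ M.sat w φ) :
    M.R a (skolemInterp M v t) (skolemInterp M v (.sk a φ t)) ∧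
      ¬ M.sat (skolemInterp M v (.sk a φ t)) φ := by
  rw [skolemInterp, dif_pos h]
  exact h.choose_spec

theorem TKm.exists_denominator_holds {M : KModel m} {v : M.W} {s : Set (TabFm m)}
    {ds : List (Set (TabFm m))} (hs : ∀ f ∈ s, f.Holds M (skolemInterp M v))
    (hC : TKm m s ds) : ∃ d ∈ ds, ∀ f ∈ d, f.Holds M (skolemInterp M v) := by
  rcases hC with ⟨φ, x, hf, rfl⟩ | ⟨φ, x, hf, rfl⟩ | ⟨φ, ψ, x, hf, rfl⟩ | ⟨φ, ψ, x, hf, rfl⟩ |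
      ⟨a, φ, x, y, hf, -, rfl⟩ | ⟨a, φ, x, hf, rfl⟩ | ⟨φ, x, hT, hF, rfl⟩ | ⟨a, x, y, hT, hF, rfl⟩
  · simpa [TabFm.Holds, KModel.sat] using hs _ hf
  · simpa [TabFm.Holds, KModel.sat] using hs _ hf
  · simpa [TabFm.Holds, KModel.sat] using hs _ hf
  · simpa [TabFm.Holds, KModel.sat] using hs _ hf
  · have hbox := hs _ hf
    simp only [TabFm.Holds, KModel.sat] at hbox
    simpa [TabFm.Holds] using (em' _).imp_right (hbox _)
  · have hdia := hs _ hf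
    simp only [TabFm.Holds, KModel.sat, not_forall, exists_prop] at hdia
    simpa [TabFm.Holds] using skolemInterp_sk hdia
  · exact absurd (hs _ hT) (hs _ hF)
  · exact absurd (hs _ hT) (hs _ hF)

end Soundness

section Branches

variable {m : ℕ} {C : Calc m} {N : Set (Fm m)}

theorem Tableau.node_ne_none_of_prefix (Tb : Tableau m C N) {p q : List ℕ} (hpq : p <+: q)
    (hq : Tb.node q ≠ none) : Tb.node p ≠ none := by
  induction q using List.reverseRecOn with
  | nil => rwa [List.prefix_nil.mp hpq]
  | append_singleton q i ih =>
    rcases List.prefix_concat_iff.mp hpq with rfl | hpq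
    · exact hq
    · exact ih hpq (Tb.tree q i hq)

open Classical in
noncomputable def extendPos (G : List ℕ → Prop) (p : List ℕ) : List ℕ :=
  if h : ∃ i, G (p ++ [i]) then p ++ [h.choose] else p

theorem extendPos_cases (G : List ℕ → Prop) (p : List ℕ) :
    (∃ i, G (p ++ [i]) ∧ extendPos G p = p ++ [i]) ∨
      ((¬ ∃ i, G (p ++ [i])) ∧ extendPos G p = p) := by
  by_cases h : ∃ i, G (p ++ [i])
  · exact .inl ⟨h.choose, h.choose_spec, dif_pos h⟩
  · exact .inr ⟨h, dif_neg h⟩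

noncomputable def greedyPath (G : List ℕ → Prop) (n : ℕ) : List ℕ := (extendPos G)^[n] []

theorem greedyPath_succ (G : List ℕ → Prop) (n : ℕ) :
    greedyPath G (n + 1) = extendPos G (greedyPath G n) :=
  Function.iterate_succ_apply' _ _ _

theorem greedyPath_spec {G : List ℕ → Prop} (h0 : G []) (n : ℕ) : G (greedyPath G n) := by
  induction n with
  | zero => exact h0
  | succ n ih =>
    rw [greedyPath_succ]
    rcases extendPos_cases G (greedyPath G n) with ⟨i, hi, he⟩ | ⟨-, he⟩ <;> rw [he]
    exacts [hi, ih]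

theorem greedyPath_prefix_of_le (G : List ℕ → Prop) {n k : ℕ} (hnk : n ≤ k) :
    greedyPath G n <+: greedyPath G k := by
  induction k, hnk using Nat.le_induction with
  | base => exact List.prefix_rfl
  | succ k _ ih =>
    rw [greedyPath_succ]
    rcases extendPos_cases G (greedyPath G k) with ⟨i, -, he⟩ | ⟨-, he⟩ <;> rw [he]
    exacts [ih.trans (List.prefix_append _ _), ih]

theorem exists_greedyPath_eq_of_prefix (G : List ℕ → Prop) {q : List ℕ} (n : ℕ)
    (hq : q <+: greedyPath G n) : ∃ k, greedyPath G k = q := by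
  induction n with
  | zero => exact ⟨0, (List.prefix_nil.mp hq).symm⟩
  | succ n ih =>
    rw [greedyPath_succ] at hq
    rcases extendPos_cases G (greedyPath G n) with ⟨i, -, he⟩ | ⟨-, he⟩ <;> rw [he] at hq
    · rcases List.prefix_concat_iff.mp hq with rfl | hq
      exacts [⟨n + 1, by rw [greedyPath_succ, he]⟩, ih hq]
    · exact ih hq

theorem length_greedyPath_or_stuck (G : List ℕ → Prop) (n : ℕ) :
    (greedyPath G n).length = n ∨ ¬ ∃ i, G (greedyPath G n ++ [i]) := by
  induction n with
  | zero => exact .inl rfl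
  | succ n ih =>
    rw [greedyPath_succ]
    rcases extendPos_cases G (greedyPath G n) with ⟨i, hi, he⟩ | ⟨hstuck, he⟩ <;> rw [he]
    · exact .inl (by simpa using ih.resolve_right (not_not.mpr ⟨i, hi⟩))
    · exact .inr hstuck

theorem Tableau.exists_branch_forall_pos (Tb : Tableau m C N) (G : List ℕ → Prop) (h0 : G [])
    (hnode : ∀ p, G p → Tb.node p ≠ none)
    (hstep : ∀ p, G p → (∃ i, Tb.node (p ++ [i]) ≠ none) → ∃ i, G (p ++ [i])) :
    ∃ Br : Branch Tb, ∀ p ∈ Br.pos, G p := by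
  refine ⟨⟨Set.range (greedyPath G), ?_, ?_, ?_, ?_⟩, ?_⟩
  · rintro _ ⟨n, rfl⟩
    exact hnode _ (greedyPath_spec h0 n)
  · rintro _ ⟨n, rfl⟩ _ ⟨k, rfl⟩
    exact (le_total n k).imp (greedyPath_prefix_of_le G) (greedyPath_prefix_of_le G)
  · rintro _ ⟨n, rfl⟩ q hq
    exact exists_greedyPath_eq_of_prefix G n hq
  · intro q hq hcomp
    set n := q.length
    rcases hcomp _ ⟨n, rfl⟩ with ⟨r, hr⟩ | hq'
    · rcases length_greedyPath_or_stuck G n with hlen | hstuck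
      · exact ⟨n, List.IsPrefix.eq_of_length ⟨r, hr⟩ hlen⟩
      · rcases r with _ | ⟨j, r⟩
        · exact ⟨n, by simpa using hr⟩
        · have hchild : Tb.node (greedyPath G n ++ [j]) ≠ none :=
            Tb.node_ne_none_of_prefix ⟨r, by simpa using hr⟩ hq
          exact absurd (hstep _ (greedyPath_spec h0 n) ⟨j, hchild⟩) hstuck
    · exact exists_greedyPath_eq_of_prefix G n hq'
  · rintro _ ⟨n, rfl⟩
    exact greedyPath_spec h0 n

theorem Tableau.exists_branch_forall_fmls (Tb : Tableau m C N) (Q : TabFm m → Prop)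
    (h0 : ∀ f ∈ initial N, Q f)
    (hstep : ∀ s ds, (∀ f ∈ s, Q f) → C s ds → ∃ d ∈ ds, ∀ f ∈ d, Q f) :
    ∃ Br : Branch Tb, ∀ f ∈ Br.fmls, Q f := by
  set G : List ℕ → Prop := fun p => ∃ s, Tb.node p = some s ∧ ∀ f ∈ s, Q f
  have hG : ∀ p, G p → (∃ i, Tb.node (p ++ [i]) ≠ none) → ∃ i, G (p ++ [i]) := by
    rintro p ⟨s, hs, hQ⟩ ⟨i₀, hi₀⟩
    rcases Tb.step p s hs with hleaf | ⟨ds, hC, hchildren⟩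
    · exact absurd (hleaf i₀) hi₀
    obtain ⟨d, hd, hdQ⟩ := hstep s ds hQ hC
    obtain ⟨i, hi⟩ := List.mem_iff_getElem?.mp hd
    refine ⟨i, s ∪ d, by rw [hchildren i, hi]; rfl, ?_⟩
    rintro f (hf | hf)
    exacts [hQ f hf, hdQ f hf]
  obtain ⟨Br, hBr⟩ := Tb.exists_branch_forall_pos G ⟨_, Tb.rootEq, h0⟩
    (fun p ⟨s, hs, _⟩ => by simp [hs]) hG
  refine ⟨Br, ?_⟩
  rintro f ⟨p, hp, s, hs, hf⟩
  obtain ⟨s', hs', hQ⟩ := hBr p hp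
  exact hQ f (Option.some_injective _ (hs.symm.trans hs') ▸ hf)

end Branches

theorem Tableau.exists_isOpen_of_satisfiable {m : ℕ} {N : Set (Fm m)}
    (Tb : Tableau m (TKm m) N) (hN : Satisfiable N) : ∃ Br : Branch Tb, Br.IsOpen := by
  obtain ⟨M, v, hv⟩ := hN
  obtain ⟨Br, hBr⟩ := Tb.exists_branch_forall_fmls (·.Holds M (skolemInterp M v))
    (by rintro _ ⟨φ, hφ, rfl⟩; exact hv φ hφ) (fun _ _ => TKm.exists_denominator_holds)
  refine ⟨Br, fun hC => ?_⟩
  -- a closure rule has no denominator, let alone a true one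
  obtain ⟨d, hd, -⟩ := TKm.exists_denominator_holds hBr hC
  exact List.not_mem_nil hd

/-- The tableau calculus `T_{K_m}` is sound and constructively complete
for the logic `K_m`: every fully expanded `T_{K_m}`-tableau for a satisfiable finite set
`N` of `K_m`-formulas has an open branch; and for every open branch `B` of a fully
expanded `T_{K_m}`-tableau there exists a `K_m`-model `I(B)`, whose domain is the set of
labels occurring in `B`, in which every tableau formula of `B` is true. -/
theorem TKm_sound_and_constructively_complete (m : ℕ) :
    (∀ N : Set (Fm m), N.Finite → Satisfiable N →
      ∀ Tb : Tableau m (TKm m) N, Tb.Expanded → ∃ Br : Branch Tb, Br.IsOpen) ∧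
    (∀ (N : Set (Fm m)) (Tb : Tableau m (TKm m) N), Tb.Expanded →
      ∀ Br : Branch Tb, Br.IsOpen → ∃ M : LModel m, Reflects M Br.fmls) :=
  ⟨fun _ _ hN Tb _ => Tb.exists_isOpen_of_satisfiable hN,
    fun _ _ hexp Br hopen =>
      ⟨canonicalModel Br.fmls, reflects_canonicalModel (hexp Br hopen) hopen⟩⟩

end KmTableau
end

section
/- The tableau calculus T_{K_m(¬)} is sound and constructively complete for the logic K_m(¬): every fully expanded T_{K_m(¬)}-tableau for a satisfiable finite set of K_m(¬)-formulas has an open branch, and for every open branch B of a fully expanded T_{K_m(¬)}-tableau there exists a K_m(¬)-model I(B), whose domain is the set of labels occurring in B, in which every tableau formula of B is true (T(φ,t)∈B implies I(B),t ⊨ φ; F(φ,t)∈B implies I(B),t ⊭ φ; T_R(α,t,t')∈B implies (t,t')∈R_α in I(B); F_R(α,t,t')∈B implies (t,t')∉R_α in I(B)). -/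
set_option autoImplicit false

namespace KmNotTableau

/-- Relation terms of the logic `K_m(¬)`: `α ::= a_1 | … | a_m | ¬α`. -/
inductive RTerm (m : ℕ) : Type
  | atom : Fin m → RTerm m
  | neg : RTerm m → RTerm m

/-- Formulas of the logic `K_m(¬)`: `φ ::= p | ¬φ | φ∨φ | [α]φ`. -/
inductive Fm (m : ℕ) : Type
  | var : ℕ → Fm m
  | neg : Fm m → Fm m
  | or : Fm m → Fm m → Fm m
  | box : RTerm m → Fm m → Fm m

/-- A `K_m(¬)`-model `M = (W, (R_a)_a, V)` with `W` nonempty. -/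
structure KModel (m : ℕ) where
  W : Type
  ne : Nonempty W
  R : Fin m → W → W → Prop
  V : ℕ → W → Prop

/-- Interpretation of relation terms: `R_{¬α} = (W×W) ∖ R_α`. -/
def KModel.RT {m : ℕ} (M : KModel m) : RTerm m → M.W → M.W → Prop
  | .atom a => M.R a
  | .neg α => fun v w => ¬ M.RT α v w

/-- Satisfaction in a `K_m(¬)`-model. -/
def KModel.sat {m : ℕ} (M : KModel m) : M.W → Fm m → Prop
  | v, .var p => M.V p v
  | v, .neg φ => ¬ M.sat v φ
  | v, .or φ ψ => M.sat v φ ∨ M.sat v ψ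
  | v, .box α φ => ∀ w, M.RT α v w → M.sat w φ

/-- A set of formulas is satisfiable if some model and world satisfy all its members. -/
def Satisfiable {m : ℕ} (N : Set (Fm m)) : Prop :=
  ∃ (M : KModel m) (v : M.W), ∀ φ ∈ N, M.sat v φ

/-- Labels: terms generated from the initial constant `a₀` and Skolem terms `f(α,φ,t)`. -/
inductive Label (m : ℕ) : Type
  | a0 : Label m
  | sk : RTerm m → Fm m → Label m → Label m

/-- Tableau formulas: `T(φ,t)`, `F(φ,t)`, `T_R(α,t,t')`, `F_R(α,t,t')`. -/
inductive TabFm (m : ℕ) : Type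
  | T : Fm m → Label m → TabFm m
  | F : Fm m → Label m → TabFm m
  | TR : RTerm m → Label m → Label m → TabFm m
  | FR : RTerm m → Label m → Label m → TabFm m

/-- The labels occurring in a tableau formula. -/
def TabFm.labels {m : ℕ} : TabFm m → Set (Label m)
  | .T _ t => {t}
  | .F _ t => {t}
  | .TR _ t t' => {t, t'}
  | .FR _ t t' => {t, t'}

/-- The labels occurring in a set of tableau formulas (the initial label `a₀`,
introduced at the root, always counts as occurring). -/
def Lab {m : ℕ} (B : Set (TabFm m)) : Set (Label m) :=
  insert Label.a0 {t | ∃ f ∈ B, t ∈ f.labels}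

/-- A calculus: `C s ds` holds if, on a branch whose set of formulas is `s`, some rule
of the calculus is applicable with denominator instances `ds` (a closure rule
application has `ds = []`). -/
abbrev Calc (m : ℕ) := Set (TabFm m) → List (Set (TabFm m)) → Prop

/-- The root node `{T(φ,a₀) | φ ∈ N}` of a tableau for input `N`. -/
def initial {m : ℕ} (N : Set (Fm m)) : Set (TabFm m) :=
  {f | ∃ φ ∈ N, f = TabFm.T φ Label.a0}

/-- A tableau for input `N` in calculus `C`: a finitely branching tree of sets of tableau
formulas (nodes indexed by positions `List ℕ`, children of `p` being `p ++ [i]`), whose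
root is `{T(φ,a₀) | φ ∈ N}`, and such that the children of every node are obtained by
applying a rule of `C`: each child adds one denominator instance to the node's set. -/
structure Tableau (m : ℕ) (C : Calc m) (N : Set (Fm m)) where
  node : List ℕ → Option (Set (TabFm m))
  rootEq : node [] = some (initial N)
  tree : ∀ (p : List ℕ) (i : ℕ), node (p ++ [i]) ≠ none → node p ≠ none
  step : ∀ (p : List ℕ) (s : Set (TabFm m)), node p = some s →
    (∀ i : ℕ, node (p ++ [i]) = none) ∨
    (∃ ds, C s ds ∧ ∀ i : ℕ, node (p ++ [i]) = (ds[i]?).map (fun d => s ∪ d))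

/-- A branch of a tableau: a maximal path from the root (represented by its
set of positions, a maximal chain under the prefix order). -/
structure Branch {m : ℕ} {C : Calc m} {N : Set (Fm m)} (Tb : Tableau m C N) where
  pos : Set (List ℕ)
  inTree : ∀ p ∈ pos, Tb.node p ≠ none
  chain : ∀ p ∈ pos, ∀ q ∈ pos, p <+: q ∨ q <+: p
  downClosed : ∀ p ∈ pos, ∀ q : List ℕ, q <+: p → q ∈ pos
  maximal : ∀ q : List ℕ, Tb.node q ≠ none → (∀ p ∈ pos, p <+: q ∨ q <+: p) → q ∈ pos

/-- The set of tableau formulas occurring on a branch. -/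
def Branch.fmls {m : ℕ} {C : Calc m} {N : Set (Fm m)} {Tb : Tableau m C N}
    (Br : Branch Tb) : Set (TabFm m) :=
  {f | ∃ p ∈ Br.pos, ∃ s, Tb.node p = some s ∧ f ∈ s}

/-- A branch is open if no closure rule has been applied (is applicable) on it. -/
def Branch.IsOpen {m : ℕ} {C : Calc m} {N : Set (Fm m)} {Tb : Tableau m C N}
    (Br : Branch Tb) : Prop := ¬ C Br.fmls []

/-- A tableau is fully expanded if on every open branch every applicable rule has been
applied, i.e. some denominator instance of the rule is already contained in the branch. -/
def Tableau.Expanded {m : ℕ} {C : Calc m} {N : Set (Fm m)} (Tb : Tableau m C N) : Prop :=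
  ∀ Br : Branch Tb, Br.IsOpen → ∀ ds, C Br.fmls ds → ∃ d ∈ ds, d ⊆ Br.fmls

/-- A `K_m(¬)`-model whose domain is (a set of) labels: the model `I(B)` constructed
from a branch has domain the set of labels occurring in `B`. -/
structure LModel (m : ℕ) where
  R : Fin m → Label m → Label m → Prop
  V : ℕ → Label m → Prop

/-- Interpretation of relation terms in a label model: `R_{¬α}` is the complement. -/
def LModel.RT {m : ℕ} (M : LModel m) : RTerm m → Label m → Label m → Prop
  | .atom a => M.R a
  | .neg α => fun t t' => ¬ M.RT α t t'

/-- Satisfaction in a label model relativised to its domain `D`. -/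
def LModel.sat {m : ℕ} (M : LModel m) (D : Set (Label m)) : Label m → Fm m → Prop
  | t, .var p => M.V p t
  | t, .neg φ => ¬ M.sat D t φ
  | t, .or φ ψ => M.sat D t φ ∨ M.sat D t ψ
  | t, .box α φ => ∀ t' ∈ D, M.RT α t t' → M.sat D t' φ

/-- Every tableau formula of `B` is true in the model `M` with domain `Lab B`:
`T(φ,t) ∈ B` implies `φ` holds at `t`; `F(φ,t) ∈ B` implies `φ` fails at `t`;
`T_R(α,t,t') ∈ B` implies `(t,t') ∈ R_α`; `F_R(α,t,t') ∈ B` implies `(t,t') ∉ R_α`. -/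
def Reflects {m : ℕ} (M : LModel m) (B : Set (TabFm m)) : Prop :=
  (∀ φ t, TabFm.T φ t ∈ B → M.sat (Lab B) t φ) ∧
  (∀ φ t, TabFm.F φ t ∈ B → ¬ M.sat (Lab B) t φ) ∧
  (∀ α t t', TabFm.TR α t t' ∈ B → M.RT α t t') ∧
  (∀ α t t', TabFm.FR α t t' ∈ B → ¬ M.RT α t t')

/-- The calculus `T_{K_m(¬)}`. -/
def TKmNot (m : ℕ) : Calc m := fun s ds =>
  -- (¬⁺) T(¬p,x) / F(p,x)
  (∃ φ x, TabFm.T (.neg φ) x ∈ s ∧ ds = [{TabFm.F φ x}]) ∨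
  -- (¬⁻) F(¬p,x) / T(p,x)
  (∃ φ x, TabFm.F (.neg φ) x ∈ s ∧ ds = [{TabFm.T φ x}]) ∨
  -- (∨⁺) T(p∨q,x) / T(p,x) | T(q,x)
  (∃ φ ψ x, TabFm.T (.or φ ψ) x ∈ s ∧ ds = [{TabFm.T φ x}, {TabFm.T ψ x}]) ∨
  -- (∨⁻) F(p∨q,x) / F(p,x), F(q,x)
  (∃ φ ψ x, TabFm.F (.or φ ψ) x ∈ s ∧ ds = [{TabFm.F φ x, TabFm.F ψ x}]) ∨
  -- (box) T([r]p,x) / F_R(r,x,y) | T(p,y), for any label y occurring on the branch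
  (∃ α φ x y, TabFm.T (.box α φ) x ∈ s ∧ y ∈ Lab s ∧
    ds = [{TabFm.FR α x y}, {TabFm.T φ y}]) ∨
  -- (dia) F([r]p,x) / T_R(r,x,f(r,p,x)), F(p,f(r,p,x))
  (∃ α φ x, TabFm.F (.box α φ) x ∈ s ∧
    ds = [{TabFm.TR α x (Label.sk α φ x), TabFm.F φ (Label.sk α φ x)}]) ∨
  -- closure rules
  (∃ φ x, TabFm.T φ x ∈ s ∧ TabFm.F φ x ∈ s ∧ ds = []) ∨
  (∃ α x y, TabFm.TR α x y ∈ s ∧ TabFm.FR α x y ∈ s ∧ ds = []) ∨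
  -- (¬R⁺) T_R(¬r,x,y) / F_R(r,x,y)
  (∃ α x y, TabFm.TR (.neg α) x y ∈ s ∧ ds = [{TabFm.FR α x y}]) ∨
  -- (¬R⁻) F_R(¬r,x,y) / T_R(r,x,y)
  (∃ α x y, TabFm.FR (.neg α) x y ∈ s ∧ ds = [{TabFm.TR α x y}])

/-!
Soundness: fix a model of `N` and interpret labels in it, sending `a₀` to the satisfying
world and each Skolem label `f(α,φ,t)` to an `α`-successor refuting `φ` whenever one
exists. Every rule applied to a set of tableau formulas true under this interpretation has
a denominator that is true as well, so always descending into such a child yields a branch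
of true formulas, and such a branch cannot be closed.

Completeness: on an open, fully expanded branch `B`, take as `a`-edges the `T_R(a,t,t')`
and as true variables the `T(p,t)` of `B`. Induction on relation terms, then on formulas,
shows that this model makes every formula of `B` true: (box) has been applied for every
label of `B`, and (dia) provides the Skolem witness on the branch.
-/

def Calc.Preserves {m : ℕ} (C : Calc m) (P : Set (TabFm m) → Prop) : Prop :=
  ∀ s ds, P s → C s ds → ∃ d ∈ ds, P (s ∪ d)

def Calc.Saturated {m : ℕ} (C : Calc m) (B : Set (TabFm m)) : Prop :=
  ∀ ds, C B ds → ∃ d ∈ ds, d ⊆ B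

namespace Tableau

variable {m : ℕ} {C : Calc m} {N : Set (Fm m)} (Tb : Tableau m C N)

theorem node_ne_none_of_prefix {p q : List ℕ} (hpq : p <+: q) (hq : Tb.node q ≠ none) :
    Tb.node p ≠ none := by
  obtain ⟨r, rfl⟩ := hpq
  induction r using List.reverseRecOn with
  | nil => simpa using hq
  | append_singleton r i ih => exact ih (Tb.tree _ i (by simpa using hq))

def NodeSat (P : Set (TabFm m) → Prop) (p : List ℕ) : Prop :=
  ∃ s, Tb.node p = some s ∧ P s

open Classical in
noncomputable def goodChild (P : Set (TabFm m) → Prop) (p : List ℕ) : ℕ :=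
  if h : ∃ i, Tb.NodeSat P (p ++ [i]) then h.choose else 0

/-- Once it has reached a leaf, the path leaves the tree. -/
noncomputable def goodPath (P : Set (TabFm m) → Prop) : ℕ → List ℕ
  | 0 => []
  | n + 1 => goodPath P n ++ [Tb.goodChild P (goodPath P n)]

variable {Tb} {P : Set (TabFm m) → Prop}

theorem length_goodPath (n : ℕ) : (Tb.goodPath P n).length = n := by
  induction n with
  | zero => rfl
  | succ n ih => simp [goodPath, ih]

theorem goodPath_prefix {n k : ℕ} (h : n ≤ k) : Tb.goodPath P n <+: Tb.goodPath P k := by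
  induction k, h using Nat.le_induction with
  | base => exact List.prefix_refl _
  | succ k _ ih => exact ih.trans (List.prefix_append _ _)

theorem goodPath_eq_of_prefix {q : List ℕ} {n : ℕ} (hq : q <+: Tb.goodPath P n) :
    Tb.goodPath P q.length = q := by
  have hle : q.length ≤ n := length_goodPath (Tb := Tb) (P := P) n ▸ hq.length_le
  refine (List.prefix_of_prefix_length_le (goodPath_prefix hle) hq ?_).eq_of_length ?_ <;>
    simp [length_goodPath]

theorem nodeSat_goodChild (hP : C.Preserves P) {p : List ℕ} {i : ℕ}
    (hp : Tb.NodeSat P p) (hi : Tb.node (p ++ [i]) ≠ none) : Tb.NodeSat P (p ++ [Tb.goodChild P p]) := by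
  obtain ⟨s, hs, hPs⟩ := hp
  rcases Tb.step p s hs with hleaf | ⟨ds, hC, hchildren⟩
  · exact absurd (hleaf i) hi
  obtain ⟨d, hd, hPd⟩ := hP s ds hPs hC
  obtain ⟨j, hj, rfl⟩ := List.getElem_of_mem hd
  have hgood : ∃ i, Tb.NodeSat P (p ++ [i]) :=
    ⟨j, s ∪ ds[j], by rw [hchildren j, List.getElem?_eq_getElem hj]; rfl, hPd⟩
  rw [goodChild, dif_pos hgood]
  exact hgood.choose_spec

theorem nodeSat_goodPath (hP : C.Preserves P) (hroot : P (initial N)) {n : ℕ}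
    (hn : Tb.node (Tb.goodPath P n) ≠ none) : Tb.NodeSat P (Tb.goodPath P n) := by
  induction n with
  | zero => exact ⟨_, Tb.rootEq, hroot⟩
  | succ n ih =>
    exact nodeSat_goodChild hP (ih (Tb.tree _ _ hn)) hn

theorem goodPath_prefix_of_maximal (hP : C.Preserves P)
    (hroot : P (initial N)) {q : List ℕ} (hq : Tb.node q ≠ none)
    (hcomp : ∀ n, Tb.node (Tb.goodPath P n) ≠ none →
      Tb.goodPath P n <+: q ∨ q <+: Tb.goodPath P n) {k : ℕ} (hk : k ≤ q.length) :
    Tb.goodPath P k <+: q := by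
  induction k with
  | zero => exact List.nil_prefix
  | succ k ih =>
    have hpre := ih (by omega)
    have hchild : Tb.goodPath P k ++ [q[k]] <+: q := by
      rw [List.prefix_iff_eq_take.mp hpre, length_goodPath, ← List.concat_eq_append,
        List.take_concat_get]
      exact List.take_prefix _ _
    have hsat := nodeSat_goodChild hP
      (nodeSat_goodPath hP hroot (Tb.node_ne_none_of_prefix hpre hq))
      (Tb.node_ne_none_of_prefix hchild hq)
    obtain ⟨s, hs, -⟩ := hsat
    rcases hcomp (k + 1) (by simp [goodPath, hs]) with h | h
    · exact h
    · exact List.prefix_of_prefix_length_le (List.prefix_refl _) h (by simpa [length_goodPath])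

theorem exists_branch_nodeSat (hP : C.Preserves P)
    (hroot : P (initial N)) : ∃ Br : Branch Tb, ∀ p ∈ Br.pos, Tb.NodeSat P p := by
  refine ⟨⟨{p | Tb.node p ≠ none ∧ ∃ n, Tb.goodPath P n = p}, ?_, ?_, ?_, ?_⟩, ?_⟩
  · exact fun p hp => hp.1
  · rintro _ ⟨-, n, rfl⟩ _ ⟨-, k, rfl⟩
    exact (le_total n k).imp goodPath_prefix goodPath_prefix
  · rintro _ ⟨hp, n, rfl⟩ q hq
    exact ⟨Tb.node_ne_none_of_prefix hq hp, q.length, goodPath_eq_of_prefix hq⟩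
  · intro q hq hcomp
    refine ⟨hq, q.length, (goodPath_prefix_of_maximal hP hroot hq ?_ le_rfl).eq_of_length
      (length_goodPath _)⟩
    exact fun n hn => hcomp _ ⟨hn, n, rfl⟩
  · rintro _ ⟨hp, n, rfl⟩
    exact nodeSat_goodPath hP hroot hp

end Tableau

section Soundness

variable {m : ℕ}

/-- The Skolem label `f(α,φ,t)` denotes an `α`-successor of `t` refuting `φ` when there is
one; otherwise its value is irrelevant. -/
noncomputable def labelVal (M : KModel m) (v : M.W) : Label m → M.W
  | .a0 => v
  | .sk α φ t =>
      open Classical in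
      if h : ∃ w, M.RT α (labelVal M v t) w ∧ ¬ M.sat w φ then h.choose else labelVal M v t

theorem labelVal_sk (M : KModel m) (v : M.W) {α : RTerm m} {φ : Fm m} {t : Label m}
    (h : ∃ w, M.RT α (labelVal M v t) w ∧ ¬ M.sat w φ) :
    M.RT α (labelVal M v t) (labelVal M v (.sk α φ t)) ∧
      ¬ M.sat (labelVal M v (.sk α φ t)) φ := by
  rw [labelVal, dif_pos h]
  exact h.choose_spec

def Holds (M : KModel m) (ι : Label m → M.W) : TabFm m → Prop
  | .T φ t => M.sat (ι t) φ
  | .F φ t => ¬ M.sat (ι t) φ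
  | .TR α t t' => M.RT α (ι t) (ι t')
  | .FR α t t' => ¬ M.RT α (ι t) (ι t')

def Realized (M : KModel m) (ι : Label m → M.W) (s : Set (TabFm m)) : Prop :=
  ∀ f ∈ s, Holds M ι f

theorem Realized.not_closed {M : KModel m} {ι : Label m → M.W} {s : Set (TabFm m)}
    (hs : Realized M ι s) : ¬ TKmNot m s [] := by
  rintro (⟨_, _, _, ⟨⟩⟩ | ⟨_, _, _, ⟨⟩⟩ | ⟨_, _, _, _, ⟨⟩⟩ | ⟨_, _, _, _, ⟨⟩⟩ |
    ⟨_, _, _, _, _, _, ⟨⟩⟩ | ⟨_, _, _, _, ⟨⟩⟩ | ⟨_, _, hT, hF, -⟩ | ⟨_, _, _, hT, hF, -⟩ |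
    ⟨_, _, _, _, ⟨⟩⟩ | ⟨_, _, _, _, ⟨⟩⟩)
  · exact hs _ hF (hs _ hT)
  · exact hs _ hF (hs _ hT)

theorem Realized.exists_denominator (M : KModel m) (v : M.W) {s : Set (TabFm m)}
    {ds : List (Set (TabFm m))} (hs : Realized M (labelVal M v) s) (hC : TKmNot m s ds) :
    ∃ d ∈ ds, Realized M (labelVal M v) d := by
  rcases hC with ⟨φ, x, h, rfl⟩ | ⟨φ, x, h, rfl⟩ | ⟨φ, ψ, x, h, rfl⟩ | ⟨φ, ψ, x, h, rfl⟩ |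
    ⟨α, φ, x, y, h, -, rfl⟩ | ⟨α, φ, x, h, rfl⟩ | ⟨φ, x, hT, hF, rfl⟩ | ⟨α, x, y, hT, hF, rfl⟩ |
    ⟨α, x, y, h, rfl⟩ | ⟨α, x, y, h, rfl⟩
  all_goals simp only [List.mem_cons, List.not_mem_nil, or_false, exists_eq_or_imp,
    exists_eq_left, Realized, Set.forall_mem_insert, Set.mem_singleton_iff, forall_eq, Holds]
  · exact hs _ h
  · exact not_not.mp (hs _ h)
  · exact hs _ h
  · exact not_or.mp (hs _ h)
  · exact (em _).symm.imp_right (hs _ h _)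
  · exact labelVal_sk M v (by simpa [Holds, KModel.sat] using hs _ h)
  · exact (hs _ hF (hs _ hT)).elim
  · exact (hs _ hF (hs _ hT)).elim
  · exact hs _ h
  · exact not_not.mp (hs _ h)

theorem preserves_realized (M : KModel m) (v : M.W) :
    (TKmNot m).Preserves (Realized M (labelVal M v)) := by
  intro s ds hs hC
  obtain ⟨d, hd, hrd⟩ := hs.exists_denominator M v hC
  exact ⟨d, hd, fun f hf => hf.elim (hs f) (hrd f)⟩

theorem exists_open_branch_of_satisfiable {N : Set (Fm m)} (hN : Satisfiable N)
    (Tb : Tableau m (TKmNot m) N) : ∃ Br : Branch Tb, Br.IsOpen := by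
  obtain ⟨M, v, hv⟩ := hN
  have hroot : Realized M (labelVal M v) (initial N) := by
    rintro _ ⟨φ, hφ, rfl⟩
    exact hv φ hφ
  obtain ⟨Br, hBr⟩ := Tb.exists_branch_nodeSat (preserves_realized M v) hroot
  have hreal : Realized M (labelVal M v) Br.fmls := by
    rintro f ⟨p, hp, s, hs, hf⟩
    obtain ⟨s', hs', hrs'⟩ := hBr p hp
    exact hrs' f (Option.some_injective _ (hs.symm.trans hs') ▸ hf)
  exact ⟨Br, hreal.not_closed⟩

end Soundness

section Completeness

variable {m : ℕ} {B : Set (TabFm m)}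

/-- The model `I(B)` read off a branch `B`. -/
def branchModel (B : Set (TabFm m)) : LModel m where
  R a t t' := TabFm.TR (.atom a) t t' ∈ B
  V p t := TabFm.T (.var p) t ∈ B

theorem Calc.Saturated.subset {C : Calc m} (hSat : C.Saturated B) {d : Set (TabFm m)}
    (h : C B [d]) : d ⊆ B := by
  obtain ⟨d', hd', hsub⟩ := hSat _ h
  rwa [List.mem_singleton.mp hd'] at hsub

theorem branchModel_RT (hOpen : ¬ TKmNot m B [])
    (hSat : (TKmNot m).Saturated B) (α : RTerm m) (t t' : Label m) :
    (TabFm.TR α t t' ∈ B → (branchModel B).RT α t t') ∧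
      (TabFm.FR α t t' ∈ B → ¬ (branchModel B).RT α t t') := by
  induction α with
  | atom a =>
    exact ⟨id, fun hF hT => hOpen <| .inr <| .inr <| .inr <| .inr <| .inr <| .inr <| .inr <|
      .inl ⟨_, t, t', hT, hF, rfl⟩⟩
  | neg α ih =>
    refine ⟨fun h => ih.2 ?_, fun h => not_not_intro (ih.1 ?_)⟩
    · exact hSat.subset (.inr <| .inr <| .inr <| .inr <| .inr <| .inr <| .inr <|
        .inr <| .inl ⟨α, t, t', h, rfl⟩) rfl
    · exact hSat.subset (.inr <| .inr <| .inr <| .inr <| .inr <| .inr <| .inr <|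
        .inr <| .inr ⟨α, t, t', h, rfl⟩) rfl

theorem branchModel_sat (hOpen : ¬ TKmNot m B [])
    (hSat : (TKmNot m).Saturated B) (φ : Fm m) (t : Label m) :
    (TabFm.T φ t ∈ B → (branchModel B).sat (Lab B) t φ) ∧
      (TabFm.F φ t ∈ B → ¬ (branchModel B).sat (Lab B) t φ) := by
  induction φ generalizing t with
  | var p =>
    exact ⟨id, fun hF hT => hOpen <| .inr <| .inr <| .inr <| .inr <| .inr <| .inr <|
      .inl ⟨_, t, hT, hF, rfl⟩⟩
  | neg φ ih =>
    refine ⟨fun h => (ih t).2 ?_, fun h => not_not_intro ((ih t).1 ?_)⟩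
    · exact hSat.subset (.inl ⟨φ, t, h, rfl⟩) rfl
    · exact hSat.subset (.inr <| .inl ⟨φ, t, h, rfl⟩) rfl
  | or φ ψ ihφ ihψ =>
    constructor
    · intro h
      obtain ⟨d, hd, hsub⟩ := hSat _ (.inr <| .inr <| .inl ⟨φ, ψ, t, h, rfl⟩)
      simp only [List.mem_cons, List.not_mem_nil, or_false] at hd
      rcases hd with rfl | rfl
      · exact .inl ((ihφ t).1 (hsub rfl))
      · exact .inr ((ihψ t).1 (hsub rfl))
    · intro h
      have hsub := hSat.subset (.inr <| .inr <| .inr <| .inl ⟨φ, ψ, t, h, rfl⟩)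
      rintro (hφ | hψ)
      · exact (ihφ t).2 (hsub (.inl rfl)) hφ
      · exact (ihψ t).2 (hsub (.inr rfl)) hψ
  | box α φ ih =>
    constructor
    · intro h t' ht' hR
      obtain ⟨d, hd, hsub⟩ :=
        hSat _ (.inr <| .inr <| .inr <| .inr <| .inl ⟨α, φ, t, t', h, ht', rfl⟩)
      simp only [List.mem_cons, List.not_mem_nil, or_false] at hd
      rcases hd with rfl | rfl
      · exact absurd hR ((branchModel_RT hOpen hSat α t t').2 (hsub rfl))
      · exact (ih t').1 (hsub rfl)
    · intro h hbox
      have hsub := hSat.subset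
        (.inr <| .inr <| .inr <| .inr <| .inr <| .inl ⟨α, φ, t, h, rfl⟩)
      have hTR := hsub (.inl rfl)
      have hsk : Label.sk α φ t ∈ Lab B := .inr ⟨_, hTR, by simp [TabFm.labels]⟩
      exact (ih _).2 (hsub (.inr rfl)) (hbox _ hsk ((branchModel_RT hOpen hSat α t _).1 hTR))

theorem reflects_branchModel (hOpen : ¬ TKmNot m B [])
    (hSat : (TKmNot m).Saturated B) : Reflects (branchModel B) B :=
  ⟨fun φ t => (branchModel_sat hOpen hSat φ t).1,
    fun φ t => (branchModel_sat hOpen hSat φ t).2,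
    fun α t t' => (branchModel_RT hOpen hSat α t t').1,
    fun α t t' => (branchModel_RT hOpen hSat α t t').2⟩

end Completeness

/-- The tableau calculus `T_{K_m(¬)}` is sound and constructively
complete for the logic `K_m(¬)`: every fully expanded `T_{K_m(¬)}`-tableau for a
satisfiable finite set of `K_m(¬)`-formulas has an open branch, and for every open
branch `B` of a fully expanded `T_{K_m(¬)}`-tableau there exists a `K_m(¬)`-model
`I(B)`, whose domain is the set of labels occurring in `B`, in which every tableau
formula of `B` is true. -/
theorem TKmNot_sound_and_constructively_complete (m : ℕ) :
    (∀ N : Set (Fm m), N.Finite → Satisfiable N →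
      ∀ Tb : Tableau m (TKmNot m) N, Tb.Expanded → ∃ Br : Branch Tb, Br.IsOpen) ∧
    (∀ (N : Set (Fm m)) (Tb : Tableau m (TKmNot m) N), Tb.Expanded →
      ∀ Br : Branch Tb, Br.IsOpen → ∃ M : LModel m, Reflects M Br.fmls) :=
  ⟨fun _ _ hN Tb _ => exists_open_branch_of_satisfiable hN Tb,
    fun _ _ hExp Br hOpen => ⟨_, reflects_branchModel hOpen (hExp Br hOpen)⟩⟩

end KmNotTableau
end

section
/- The refined calculus Rf(box, T_{K_m(¬)}) is not complete for K_m(¬): the set consisting of T([¬¬a]p, v), T_R(a,v,w), F(p,w) is K_m(¬)-unsatisfiable (no K_m(¬)-model M and worlds v,w satisfy M,v ⊨ [¬¬a]p, (v,w) ∈ R_a and M,w ⊭ p), yet no rule of Rf(box, T_{K_m(¬)}) is applicable to this set, so it is itself a fully expanded open tableau for an unsatisfiable input. -/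
set_option autoImplicit false

namespace KmNotTableau

/-- The refined calculus `Rf(box, T_{K_m(¬)})`: `T_{K_m(¬)}` with the rule (box)
replaced by the rule (□): `T([r]p,x), T_R(r,x,y) / T(p,y)`. -/
def RfKmNot (m : ℕ) : Calc m := fun s ds =>
  (∃ φ x, TabFm.T (.neg φ) x ∈ s ∧ ds = [{TabFm.F φ x}]) ∨
  (∃ φ x, TabFm.F (.neg φ) x ∈ s ∧ ds = [{TabFm.T φ x}]) ∨
  (∃ φ ψ x, TabFm.T (.or φ ψ) x ∈ s ∧ ds = [{TabFm.T φ x}, {TabFm.T ψ x}]) ∨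
  (∃ φ ψ x, TabFm.F (.or φ ψ) x ∈ s ∧ ds = [{TabFm.F φ x, TabFm.F ψ x}]) ∨
  -- (□) T([r]p,x), T_R(r,x,y) / T(p,y)
  (∃ α φ x y, TabFm.T (.box α φ) x ∈ s ∧ TabFm.TR α x y ∈ s ∧ ds = [{TabFm.T φ y}]) ∨
  (∃ α φ x, TabFm.F (.box α φ) x ∈ s ∧
    ds = [{TabFm.TR α x (Label.sk α φ x), TabFm.F φ (Label.sk α φ x)}]) ∨
  (∃ φ x, TabFm.T φ x ∈ s ∧ TabFm.F φ x ∈ s ∧ ds = []) ∨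
  (∃ α x y, TabFm.TR α x y ∈ s ∧ TabFm.FR α x y ∈ s ∧ ds = []) ∨
  (∃ α x y, TabFm.TR (.neg α) x y ∈ s ∧ ds = [{TabFm.FR α x y}]) ∨
  (∃ α x y, TabFm.FR (.neg α) x y ∈ s ∧ ds = [{TabFm.TR α x y}])

/-- The refined calculus `Rf(box, T_{K_m(¬)})` is not complete for
`K_m(¬)`: the set consisting of `T([¬¬a]p, v)`, `T_R(a,v,w)`, `F(p,w)` is
`K_m(¬)`-unsatisfiable (no `K_m(¬)`-model `M` and worlds `v,w` satisfy
`M,v ⊨ [¬¬a]p`, `(v,w) ∈ R_a` and `M,w ⊭ p`), yet no rule of `Rf(box, T_{K_m(¬)})`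
is applicable to this set (a rule being applicable if the set contains an instance of
all its premises and the corresponding conclusions are not already all contained in one
of its denominators' instances in the set), so it is itself a fully expanded open
tableau for an unsatisfiable input. -/
theorem RfKmNot_not_complete (m : ℕ) (a : Fin m) (p : ℕ) (v w : Label m) :
    (¬ ∃ (M : KModel m) (x y : M.W),
        M.sat x (Fm.box (.neg (.neg (.atom a))) (Fm.var p)) ∧
        M.R a x y ∧ ¬ M.sat y (Fm.var p)) ∧
    (¬ ∃ ds, RfKmNot m
        ({TabFm.T (Fm.box (.neg (.neg (.atom a))) (Fm.var p)) v,
          TabFm.TR (.atom a) v w, TabFm.F (Fm.var p) w} : Set (TabFm m)) ds ∧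
      ¬ ∃ d ∈ ds, d ⊆
        ({TabFm.T (Fm.box (.neg (.neg (.atom a))) (Fm.var p)) v,
          TabFm.TR (.atom a) v w, TabFm.F (Fm.var p) w} : Set (TabFm m))) := by
  constructor
  · rintro ⟨M, x, y, hbox, hR, hp⟩
    exact hp (hbox y (fun h => h hR))
  · rintro ⟨ds, hrule, hnd⟩
    simp only [RfKmNot, Set.mem_insert_iff, Set.mem_singleton_iff] at hrule
    rcases hrule with ⟨φ,x,h,_⟩|⟨φ,x,h,_⟩|⟨φ,ψ,x,h,_⟩|⟨φ,ψ,x,h,_⟩|⟨α,φ,x,y,h1,h2,_⟩|⟨α,φ,x,h,_⟩|⟨φ,x,h1,h2,_⟩|⟨α,x,y,h1,h2,_⟩|⟨α,x,y,h,_⟩|⟨α,x,y,h,_⟩ <;>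
      simp_all

end KmNotTableau
end

section
/- Let B be an open branch of a fully expanded Rf(box, T_{K_m(¬)}⁺)-tableau, and let I(B) be the K_m(¬)-model whose domain is the set of labels occurring in B, with V(p) = {t | T(p,t) ∈ B} and R_a = {(t,t') | T_R(a,t,t') ∈ B} for each relational constant a (and R_{¬α} = complement of R_α). Then for every relation term α and all labels t, t' occurring in B: if (t,t') ∈ R_{¬α} in I(B) (equivalently (t,t') ∉ R_α in I(B)), then T_R(α,t,t') ∉ B. -/
set_option autoImplicit false

namespace KmNotTableau

/-- The refined calculus `Rf(box, T_{K_m(¬)}⁺)` (see Statement 6). -/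
def RfKmNotPlus (m : ℕ) : Calc m := fun s ds =>
  RfKmNot m s ds ∨
  -- (□¬) T([¬r]p,x) / T_R(r,x,y) | T(p,y), for any label y occurring on the branch
  (∃ α φ x y, TabFm.T (.box (.neg α) φ) x ∈ s ∧ y ∈ Lab s ∧
    ds = [{TabFm.TR α x y}, {TabFm.T φ y}])

/-- The interpretation of relation terms in the model `I(B)` constructed from a branch
`B`: `R_a = {(t,t') | T_R(a,t,t') ∈ B}` for each relational constant `a`, and
`R_{¬α}` is the complement of `R_α`. -/
def IB_RT {m : ℕ} (B : Set (TabFm m)) : RTerm m → Label m → Label m → Prop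
  | .atom a, t, t' => TabFm.TR (.atom a) t t' ∈ B
  | .neg α, t, t' => ¬ IB_RT B α t t'

/-- Let `B` be an open branch of a fully expanded
`Rf(box, T_{K_m(¬)}⁺)`-tableau, and let `I(B)` be the `K_m(¬)`-model whose domain is the
set of labels occurring in `B`, with `V(p) = {t | T(p,t) ∈ B}` and
`R_a = {(t,t') | T_R(a,t,t') ∈ B}` for each relational constant `a`
(and `R_{¬α}` the complement of `R_α`). Then for every relation term `α` and all labels
`t, t'` occurring in `B`: if `(t,t') ∈ R_{¬α}` in `I(B)` (equivalently `(t,t') ∉ R_α` in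
`I(B)`), then `T_R(α,t,t') ∉ B`. -/
theorem IB_not_RT_implies_TR_not_mem (m : ℕ) (N : Set (Fm m))
    (Tb : Tableau m (RfKmNotPlus m) N) (hexp : Tb.Expanded)
    (Br : Branch Tb) (hopen : Br.IsOpen) :
    ∀ (α : RTerm m) (t t' : Label m), t ∈ Lab Br.fmls → t' ∈ Lab Br.fmls →
      ¬ IB_RT Br.fmls α t t' → TabFm.TR α t t' ∉ Br.fmls := by
  classical
  have key : ∀ (α : RTerm m) (t t' : Label m),
      (IB_RT Br.fmls α t t' → TabFm.FR α t t' ∉ Br.fmls) ∧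
      (¬ IB_RT Br.fmls α t t' → TabFm.TR α t t' ∉ Br.fmls) := by
    intro α
    induction α with
    | atom a =>
      intro t t'
      refine ⟨fun h hFR => ?_, fun h hTR => h hTR⟩
      exact hopen (Or.inl (Or.inr (Or.inr (Or.inr (Or.inr (Or.inr (Or.inr (Or.inr
        (Or.inl ⟨_, _, _, h, hFR, rfl⟩)))))))))
    | neg α ih =>
      intro t t'
      constructor
      · intro h hFR
        have hC : RfKmNotPlus m Br.fmls [{TabFm.TR α t t'}] :=
          Or.inl (Or.inr (Or.inr (Or.inr (Or.inr (Or.inr (Or.inr (Or.inr (Or.inr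
            (Or.inr ⟨α, t, t', hFR, rfl⟩)))))))))
        obtain ⟨d, hd, hsub⟩ := hexp Br hopen _ hC
        simp only [List.mem_singleton] at hd
        subst hd
        exact (ih t t').2 h (hsub rfl)
      · intro h hTR
        have hα : IB_RT Br.fmls α t t' := not_not.mp h
        have hC : RfKmNotPlus m Br.fmls [{TabFm.FR α t t'}] :=
          Or.inl (Or.inr (Or.inr (Or.inr (Or.inr (Or.inr (Or.inr (Or.inr (Or.inr
            (Or.inl ⟨α, t, t', hTR, rfl⟩)))))))))
        obtain ⟨d, hd, hsub⟩ := hexp Br hopen _ hC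
        simp only [List.mem_singleton] at hd
        subst hd
        exact (ih t t').1 hα (hsub rfl)
  intro α t t' _ _ h
  exact (key α t t').2 h

end KmNotTableau
end
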